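/- Let H be a finite group and φ satisfy property (*) (each φ(h) is ±identity on the abelian group it acts on). Fix a type λ. Suppose that for infinitely many primes p, every subset of Z_p ⋊_φ H \ {id} of type λ is sequenceable. Then for every torsion-free abelian group G, every subset of G ⋊_φ H \ {id} of type λ is sequenceable. -/

import Mathlib

open scoped Classical

/-- The `i`-th partial sum (partial product) of a list in a group: `s_i = x_1 ⋯ x_i`, `s_0 = 1`. -/
noncomputable def PartialSum {G : Type*} [Group G] (l : List G) (i : ℕ) : G := (l.take i).prod

/-- A finite set `S` of non-identity elements of a group is sequenceable if its elements admit
an ordering whose partial sums `s_0, …, s_k` are pairwise distinct, except possibly `s_0 = s_k`. -/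
def Sequenceable {G : Type*} [Group G] (S : Finset G) : Prop :=
  ∃ l : List G, l.Nodup ∧ l.toFinset = S ∧
    ∀ i j : ℕ, i < j → j ≤ l.length → ¬(i = 0 ∧ j = l.length) →
      PartialSum l i ≠ PartialSum l j

/-- The homomorphism `H →* MulAut (Multiplicative A)` induced by a sign character
`ε : H →* ℤˣ`: each `h` acts on the abelian group `A` as `±identity` (property (*)). -/
def signAut (A : Type*) [AddCommGroup A] {H : Type*} [Group H] (ε : H →* ℤˣ) :
    H →* MulAut (Multiplicative A) :=
  MonoidHom.mk'
    (fun h => AddEquiv.toMultiplicative ((DistribMulAction.toAddAut ℤˣ A) (ε h)))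
    (by intro a b; simp only [map_mul]; rfl)

theorem image_indep {α β : Type*} {i1 i2 : DecidableEq β} (f : α → β) (s : Finset α) :
    @Finset.image α β i1 f s = @Finset.image α β i2 f s := by
  cases Subsingleton.elim i1 i2; rfl

theorem partialSum_map {K L : Type*} [Group K] [Group L] (θ : K →* L) (l : List K) (i : ℕ) :
    PartialSum (l.map θ) i = θ (PartialSum l i) := by
  simp [PartialSum, ← List.map_take, (θ.map_list_prod _).symm]

theorem sequenceable_image {K L : Type*} [Group K] [Group L] (θ : K →* L)
    (hθ : Function.Injective θ) (S : Finset K) (h : Sequenceable S) :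
    Sequenceable (S.image θ) := by
  obtain ⟨l, hnd, hfs, hsum⟩ := h
  classical
  refine ⟨l.map θ, hnd.map hθ, by rw [← hfs]; ext x; simp, ?_⟩
  intro i j hij hjl hne heq
  rw [List.length_map] at hjl hne
  rw [partialSum_map, partialSum_map] at heq
  exact hsum i j hij hjl hne (hθ heq)

theorem sequenceable_of_image {K L : Type*} [Group K] [Group L] (θ : K →* L)
    (S : Finset K) (hinj : Set.InjOn θ S) (h : Sequenceable (S.image θ)) :
    Sequenceable S := by
  obtain ⟨l', hnd, hfs, hsum⟩ := h
  have hexists : ∀ y ∈ l', ∃ x ∈ S, θ x = y := by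
    intro y hy
    have : y ∈ S.image θ := hfs ▸ List.mem_toFinset.2 hy
    simpa using Finset.mem_image.1 this
  classical
  set inv : L → K := fun y => if h : ∃ x ∈ S, θ x = y then h.choose else 1 with hinv
  have hinvS : ∀ y ∈ l', inv y ∈ S ∧ θ (inv y) = y := by
    intro y hy
    have he := hexists y hy
    simp only [hinv, dif_pos he]
    exact ⟨he.choose_spec.1, he.choose_spec.2⟩
  set l : List K := l'.map inv with hl
  have hmap : l.map θ = l' := by
    rw [hl, List.map_map]
    refine (List.map_congr_left ?_).trans l'.map_id
    exact fun y hy => (hinvS y hy).2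
  have hndl : l.Nodup := List.Nodup.of_map θ (hmap ▸ hnd)
  have hsub : l.toFinset ⊆ S := by
    intro x hx
    obtain ⟨y, hy, rfl⟩ := List.mem_map.1 (List.mem_toFinset.1 hx)
    exact (hinvS y hy).1
  have hcard : S.card ≤ l.toFinset.card := by
    rw [List.toFinset_card_of_nodup hndl, hl, List.length_map,
      ← List.toFinset_card_of_nodup hnd, hfs, Finset.card_image_of_injOn hinj]
  refine ⟨l, hndl, Finset.eq_of_subset_of_card_le hsub hcard, ?_⟩
  intro i j hij hjl hne heq
  have hlen : l.length = l'.length := by rw [hl, List.length_map]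
  refine hsum i j hij (hlen ▸ hjl) (by rwa [hlen] at hne) ?_
  rw [← hmap, partialSum_map, partialSum_map, heq]

theorem exists_addHom_int_injOn {P : Type*} [AddCommGroup P] [Module.Finite ℤ P]
    [NoZeroSMulDivisors ℤ P] (Y : Finset P) : ∃ g : P →+ ℤ, Set.InjOn g ↑Y := by
  classical
  haveI : Module.Free ℤ P := Module.free_of_finite_type_torsion_free'
  set ι := Module.Free.ChooseBasisIndex ℤ P
  set b : Module.Basis ι ℤ P := Module.Free.chooseBasis ℤ P
  set e : ι ≃ Fin (Fintype.card ι) := Fintype.equivFin ι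
  -- polynomial attached to a coefficient vector
  set pd : (ι →₀ ℤ) → Polynomial ℤ :=
    fun d => ∑ i : ι, Polynomial.C (d i) * Polynomial.X ^ (e i : ℕ) with hpd
  have hcoeff : ∀ d : ι →₀ ℤ, ∀ i₀ : ι, (pd d).coeff (e i₀) = d i₀ := by
    intro d i₀
    rw [hpd]
    rw [Polynomial.finset_sum_coeff]
    rw [Finset.sum_eq_single i₀]
    · simp [Polynomial.coeff_X_pow]
    · intro i _ hi
      have : ((e i : ℕ)) ≠ (e i₀ : ℕ) := by
        simpa [Fin.val_eq_val, e.apply_eq_iff_eq] using hi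
      simp [Polynomial.coeff_X_pow, this.symm]
    · simp
  have hpdne : ∀ d : ι →₀ ℤ, d ≠ 0 → pd d ≠ 0 := by
    intro d hd
    obtain ⟨i₀, hi₀⟩ : ∃ i, d i ≠ 0 := by
      by_contra hc
      push_neg at hc
      exact hd (Finsupp.ext hc)
    intro h0
    apply hi₀
    rw [← hcoeff d i₀, h0, Polynomial.coeff_zero]
  have heval : ∀ (d : ι →₀ ℤ) (M : ℤ),
      (pd d).eval M = ∑ i : ι, d i * M ^ (e i : ℕ) := by
    intro d M
    rw [hpd]
    simp [Polynomial.eval_finset_sum]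
  -- bad set of values M
  set bad : Set ℤ := ⋃ (x ∈ Y) (y ∈ Y) (_ : x ≠ y), {M | (pd (b.repr (x - y))).IsRoot M}
    with hbad
  have hbadfin : bad.Finite := by
    refine Set.Finite.biUnion Y.finite_toSet fun x _ => ?_
    refine Set.Finite.biUnion Y.finite_toSet fun y _ => ?_
    rcases eq_or_ne x y with rfl | hxy
    · simp
    · refine Set.Finite.subset (Polynomial.finite_setOf_isRoot (p := pd (b.repr (x - y))) ?_)
        (Set.iUnion_subset fun _ => subset_rfl)
      apply hpdne
      simp only [map_sub, ne_eq]
      rw [sub_eq_zero]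
      exact fun h => hxy (b.repr.injective h)
  obtain ⟨M, hM⟩ := hbadfin.infinite_compl.nonempty
  refine ⟨AddMonoidHom.mk' (fun x => ∑ i : ι, b.repr x i * M ^ (e i : ℕ)) ?_, ?_⟩
  · intro x y
    simp [map_add, Finsupp.add_apply, add_mul, Finset.sum_add_distrib]
  · intro x hx y hy hxy
    by_contra hne
    apply hM
    rw [hbad]
    simp only [Set.mem_iUnion]
    refine ⟨x, hx, y, hy, hne, ?_⟩
    simp only [Set.mem_setOf_eq, Polynomial.IsRoot, heval, map_sub, Finsupp.sub_apply]
    simp only [AddMonoidHom.mk'_apply] at hxy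
    simp [sub_mul, Finset.sum_sub_distrib, hxy]

theorem nzsd_of_hG {G : Type*} [AddCommGroup G]
    (hG : ∀ g : G, g ≠ 0 → ∀ n : ℕ, 0 < n → n • g ≠ 0) : NoZeroSMulDivisors ℤ G := by
  constructor
  intro c x h
  by_contra hc
  push_neg at hc
  obtain ⟨hc1, hc2⟩ := hc
  refine hG x hc2 c.natAbs (Int.natAbs_pos.2 hc1) ?_
  have h' : (c.natAbs : ℤ) • x = 0 := by
    rcases Int.natAbs_eq c with h1 | h1
    · rw [← h1]; exact h
    · have : (c.natAbs : ℤ) = -c := by omega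
      rw [this, neg_smul, h, neg_zero]
  rwa [natCast_zsmul] at h'

theorem exists_prime_injOn {P : Type*} [AddCommGroup P] (Pset : Set ℕ) (hPset : Pset.Infinite)
    (g : P →+ ℤ) (Y : Finset P) (hg : Set.InjOn g ↑Y) :
    ∃ p ∈ Pset, ∃ f : P →+ ZMod p, Set.InjOn f ↑Y := by
  classical
  set B : ℕ := Y.sup fun x => (g x).natAbs with hB
  obtain ⟨p, hpmem, hpgt⟩ := hPset.exists_gt (2 * B)
  refine ⟨p, hpmem, (Int.castAddHom (ZMod p)).comp g, ?_⟩
  intro x hx y hy hxy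
  apply hg hx hy
  simp only [AddMonoidHom.coe_comp, Function.comp_apply, Int.coe_castAddHom] at hxy
  have hdvd : (p : ℤ) ∣ g y - g x := (ZMod.intCast_eq_intCast_iff _ _ _).1 hxy |>.dvd
  by_contra hne
  have h0 : g y - g x ≠ 0 := by
    rw [sub_ne_zero]; exact fun h => hne (h.symm)
  have hle : (p : ℤ) ≤ |g y - g x| := Int.le_of_dvd (abs_pos.2 h0) ((dvd_abs _ _).2 hdvd)
  have hx' : |g x| ≤ (B : ℤ) := by
    rw [Int.abs_eq_natAbs]
    exact_mod_cast Finset.le_sup (f := fun x => (g x).natAbs) hx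
  have hy' : |g y| ≤ (B : ℤ) := by
    rw [Int.abs_eq_natAbs]
    exact_mod_cast Finset.le_sup (f := fun x => (g x).natAbs) hy
  have : |g y - g x| ≤ 2 * B := by
    calc |g y - g x| ≤ |g y| + |g x| := abs_sub _ _
    _ ≤ 2 * B := by linarith
  have : (p : ℤ) ≤ 2 * B := le_trans hle this
  exact absurd (by exact_mod_cast this) (not_le.2 hpgt)

/-- induced map on semidirect products -/
def signMap {H : Type*} [Group H] (ε : H →* ℤˣ) {A B : Type*} [AddCommGroup A] [AddCommGroup B]
    (f : A →+ B) : Multiplicative A ⋊[signAut A ε] H →* Multiplicative B ⋊[signAut B ε] H :=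
  SemidirectProduct.map (AddMonoidHom.toMultiplicative f) (MonoidHom.id H) (by
    intro h
    ext x
    simp [signAut, Units.smul_def, map_zsmul])

@[simp] theorem signMap_left {H : Type*} [Group H] (ε : H →* ℤˣ) {A B : Type*} [AddCommGroup A]
    [AddCommGroup B] (f : A →+ B) (x : Multiplicative A ⋊[signAut A ε] H) :
    ((signMap ε f) x).left = Multiplicative.ofAdd (f x.left.toAdd) := rfl

@[simp] theorem signMap_right {H : Type*} [Group H] (ε : H →* ℤˣ) {A B : Type*} [AddCommGroup A]
    [AddCommGroup B] (f : A →+ B) (x : Multiplicative A ⋊[signAut A ε] H) :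
    ((signMap ε f) x).right = x.right := rfl

/-- if, for infinitely many primes `p`, every subset of `Z_p ⋊_φ H` of type `λ` is
sequenceable, then for every torsion-free abelian group `G`, every subset of `G ⋊_φ H` of
type `λ` is sequenceable. -/
theorem stmt5 (H : Type*) [Group H] [Fintype H] (ε : H →* ℤˣ) (lam : H → ℕ)
    (hp : {p : ℕ | p.Prime ∧
      ∀ S : Finset (Multiplicative (ZMod p) ⋊[signAut (ZMod p) ε] H),
        (1 : Multiplicative (ZMod p) ⋊[signAut (ZMod p) ε] H) ∉ S →
        (∀ a : H, (S.filter fun g => g.right = a).card = lam a) →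
        Sequenceable S}.Infinite)
    (G : Type*) [AddCommGroup G]
    (hG : ∀ g : G, g ≠ 0 → ∀ n : ℕ, 0 < n → n • g ≠ 0)
    (S : Finset (Multiplicative G ⋊[signAut G ε] H))
    (h1 : (1 : Multiplicative G ⋊[signAut G ε] H) ∉ S)
    (hT : ∀ a : H, (S.filter fun g => g.right = a).card = lam a) :
    Sequenceable S := by
  classical
  haveI : NoZeroSMulDivisors ℤ G := nzsd_of_hG hG
  set X : Finset G := insert 0 (S.image fun s => s.left.toAdd) with hX
  set P : Submodule ℤ G := Submodule.span ℤ ↑X with hP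
  haveI : Module.Finite ℤ ↥P := Module.Finite.span_of_finite ℤ X.finite_toSet
  have hmem : ∀ s ∈ S, s.left.toAdd ∈ P := by
    intro s hs
    apply Submodule.subset_span
    simp only [hX, Finset.coe_insert, Set.mem_insert_iff, Finset.coe_image, Set.mem_image]
    exact Or.inr ⟨s, hs, rfl⟩
  set Y : Finset ↥P := insert 0 (S.attach.image fun s => ⟨s.1.left.toAdd, hmem s.1 s.2⟩)
    with hY
  haveI : NoZeroSMulDivisors ℤ ↥P :=
    Function.Injective.noZeroSMulDivisors (fun x : ↥P => (x : G)) Subtype.val_injective rfl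
      (fun _ _ => rfl)
  obtain ⟨g, hg⟩ := exists_addHom_int_injOn Y
  obtain ⟨p, hpmem, f, hf⟩ := exists_prime_injOn _ hp g Y hg
  set Θ : Multiplicative ↥P ⋊[signAut ↥P ε] H →* Multiplicative G ⋊[signAut G ε] H :=
    signMap ε P.subtype.toAddMonoidHom with hΘ
  have hΘinj : Function.Injective Θ := by
    intro a b hab
    have h1 := congrArg SemidirectProduct.left hab
    have h2 := congrArg SemidirectProduct.right hab
    simp only [hΘ, signMap_left, signMap_right] at h1 h2
    ext
    · exact (by exact congrArg Multiplicative.toAdd h1)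
    · exact h2
  set mk : {s // s ∈ S} → Multiplicative ↥P ⋊[signAut ↥P ε] H :=
    fun s => ⟨Multiplicative.ofAdd ⟨s.1.left.toAdd, hmem s.1 s.2⟩, s.1.right⟩ with hmk
  set S₀ : Finset (Multiplicative ↥P ⋊[signAut ↥P ε] H) := S.attach.image mk with hS₀
  have hΘmk : ∀ s : {s // s ∈ S}, Θ (mk s) = s.1 := by
    intro s
    ext
    · rfl
    · rfl
  have hΘS₀ : S₀.image Θ = S := by
    rw [hS₀, Finset.image_image]
    have : (Θ ∘ mk) = fun s : {s // s ∈ S} => s.1 := funext hΘmk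
    rw [this, Finset.attach_image_val]
  have hYmem : ∀ a ∈ S₀, a.left.toAdd ∈ Y := by
    intro a ha
    rw [hS₀] at ha
    obtain ⟨s, _, rfl⟩ := Finset.mem_image.1 ha
    rw [hY]
    exact Finset.mem_insert_of_mem (Finset.mem_image_of_mem _ (Finset.mem_attach _ _))
  set Φ : Multiplicative ↥P ⋊[signAut ↥P ε] H →*
      Multiplicative (ZMod p) ⋊[signAut (ZMod p) ε] H := signMap ε f with hΦ
  have hΦinj : Set.InjOn Φ ↑S₀ := by
    intro a ha b hb hab
    have h1 := congrArg SemidirectProduct.left hab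
    have h2 := congrArg SemidirectProduct.right hab
    simp only [hΦ, signMap_left, signMap_right] at h1 h2
    ext
    · exact congrArg Subtype.val
        (hf (hYmem a ha) (hYmem b hb) (by exact congrArg Multiplicative.toAdd h1))
    · exact h2
  set S' := S₀.image Φ with hS'
  have h1' : (1 : Multiplicative (ZMod p) ⋊[signAut (ZMod p) ε] H) ∉ S' := by
    intro hmem1
    obtain ⟨a, ha, ha1⟩ := Finset.mem_image.1 hmem1
    have h1l := congrArg SemidirectProduct.left ha1
    have h1r := congrArg SemidirectProduct.right ha1
    simp only [hΦ, signMap_left, signMap_right] at h1l h1r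
    have hz : (↑Y : Set ↥P) 0 := by rw [hY]; exact Finset.mem_insert_self _ _
    have hfa : f a.left.toAdd = f 0 := by
      rw [map_zero]
      exact congrArg Multiplicative.toAdd h1l
    have ha0 : a.left.toAdd = 0 := hf (hYmem a ha) hz hfa
    have : a = 1 := by
      ext
      · exact congrArg Subtype.val ha0
      · exact h1r
    apply h1
    rw [← hΘS₀]
    rw [this] at ha
    have : Θ 1 ∈ S₀.image Θ := Finset.mem_image_of_mem _ ha
    rwa [map_one] at this
  have hT' : ∀ a : H, (S'.filter fun x => x.right = a).card = lam a := by
    intro a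
    rw [hS', Finset.filter_image]
    rw [Finset.card_image_of_injOn (hΦinj.mono (fun x hx => by
      simp only [Finset.coe_filter, Set.mem_setOf_eq] at hx
      exact hx.1))]
    have e1 : (S₀.filter fun x => (Φ x).right = a) = S₀.filter fun x => x.right = a := by
      apply Finset.filter_congr
      intro x _
      simp [hΦ, signMap_right]
    rw [e1]
    have e2 : (S.filter fun x => x.right = a)
        = (S₀.filter fun x => (Θ x).right = a).image Θ := by
      conv_lhs => rw [← hΘS₀]
      rw [Finset.filter_image]
    have e3 : (S₀.filter fun x => (Θ x).right = a) = S₀.filter fun x => x.right = a := by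
      apply Finset.filter_congr
      intro x _
      simp [hΘ, signMap_right]
    have := hT a
    rw [e2, e3, Finset.card_image_of_injOn hΘinj.injOn] at this
    exact this
  have hseq' : Sequenceable (S₀.image Φ) := hpmem.2 _ h1' hT'
  have hseq₀ : Sequenceable S₀ := by
    apply sequenceable_of_image Φ S₀ hΦinj
    convert hseq' using 1
    exact image_indep _ _
  have hfin := sequenceable_image Θ hΘinj S₀ hseq₀
  convert hfin using 1
  rw [← hΘS₀]
  exact image_indep _ _
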